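/- arXiv:1307.8081 — 3 statements merged into one kernel-verified Lean document; each statement's English description precedes it below -/
import Mathlib

section
/- Let D ≥ 1, n ≥ 2, and let T : (Fin n → Fin D × Fin D) → ℝ be a pair tensor with within-pair symmetry, slot-exchange symmetry, and satisfying the cyclic identity. Then every component of T of the form F₁ vanishes: for any slot assignment P : Fin n → Fin D × Fin D and distinct slots k ≠ l such that P k = (a,a) and P l = (a,b) for some a, b ∈ Fin D, we have T P = 0. -/
/-- A pair tensor has within-pair symmetry if its value is unchanged when the
two entries of any single pair-slot are swapped. -/
def WithinPairSymm {n D : ℕ} (T : (Fin n → Fin D × Fin D) → ℝ) : Prop :=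
  ∀ (P : Fin n → Fin D × Fin D) (k : Fin n),
    T (Function.update P k ((P k).2, (P k).1)) = T P

/-- A pair tensor has slot-exchange symmetry if its value is unchanged under
precomposition with any permutation of the slots. -/
def SlotExchangeSymm {n D : ℕ} (T : (Fin n → Fin D × Fin D) → ℝ) : Prop :=
  ∀ (P : Fin n → Fin D × Fin D) (σ : Equiv.Perm (Fin n)), T (P ∘ σ) = T P

/-- A pair tensor satisfies the cyclic identity if for any two distinct slots,
any fixed assignment of the remaining slots, and any indices `a b c d`, the
cyclic sum of its components vanishes. -/
def CyclicIdentity {n D : ℕ} (T : (Fin n → Fin D × Fin D) → ℝ) : Prop :=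
  ∀ (P : Fin n → Fin D × Fin D) (k l : Fin n), k ≠ l →
    ∀ a b c d : Fin D,
      T (Function.update (Function.update P k (a, b)) l (c, d)) +
      T (Function.update (Function.update P k (a, c)) l (d, b)) +
      T (Function.update (Function.update P k (a, d)) l (b, c)) = 0

open Function

variable {n D : ℕ} {T : (Fin n → Fin D × Fin D) → ℝ}

theorem WithinPairSymm.apply_update_swap (hwp : WithinPairSymm T)
    (P : Fin n → Fin D × Fin D) (k : Fin n) (a b : Fin D) :
    T (update P k (b, a)) = T (update P k (a, b)) := by
  simpa only [update_self, update_idem] using hwp (update P k (a, b)) k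

theorem SlotExchangeSymm.apply_update_update_comm (hse : SlotExchangeSymm T)
    (P : Fin n → Fin D × Fin D) {k l : Fin n} (hkl : k ≠ l) (x y : Fin D × Fin D) :
    T (update (update P k x) l y) = T (update (update P k y) l x) := by
  rw [← hse (update (update P k x) l y) (Equiv.swap k l)]
  congr 1
  ext j : 1
  rcases eq_or_ne j k with rfl | hjk
  · simp [hkl]
  rcases eq_or_ne j l with rfl | hjl
  · simp [hkl]
  · simp [Equiv.swap_apply_of_ne_of_ne hjk hjl, hjk, hjl]

/-- The cyclic identity at indices `(a, a, a, b)` has three terms which the two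
symmetries identify with one another, so each of them vanishes. -/
theorem CyclicIdentity.apply_update_update_diag_eq_zero (hcyc : CyclicIdentity T)
    (hwp : WithinPairSymm T) (hse : SlotExchangeSymm T)
    (P : Fin n → Fin D × Fin D) {k l : Fin n} (hkl : k ≠ l) (a b : Fin D) :
    T (update (update P k (a, a)) l (a, b)) = 0 := by
  have hsum := hcyc P k l hkl a a a b
  rw [hwp.apply_update_swap _ l a b, hse.apply_update_update_comm P hkl (a, b)] at hsum
  linarith

theorem stmt_3_general (D n : ℕ)
    (T : (Fin n → Fin D × Fin D) → ℝ)
    (hwp : WithinPairSymm T) (hse : SlotExchangeSymm T)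
    (hcyc : CyclicIdentity T) :
    ∀ (P : Fin n → Fin D × Fin D) (k l : Fin n), k ≠ l →
      ∀ a b : Fin D, P k = (a, a) → P l = (a, b) → T P = 0 := by
  intro P k l hkl a b hPk hPl
  have hP : update (update P k (a, a)) l (a, b) = P := by
    rw [← hPk, ← hPl, update_eq_self, update_eq_self]
  rw [← hP]
  exact hcyc.apply_update_update_diag_eq_zero hwp hse P hkl a b

theorem stmt_3 (D n : ℕ) (hD : 1 ≤ D) (hn : 2 ≤ n)
    (T : (Fin n → Fin D × Fin D) → ℝ)
    (hwp : WithinPairSymm T) (hse : SlotExchangeSymm T)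
    (hcyc : CyclicIdentity T) :
    ∀ (P : Fin n → Fin D × Fin D) (k l : Fin n), k ≠ l →
      ∀ a b : Fin D, P k = (a, a) → P l = (a, b) → T P = 0 :=
  stmt_3_general D n T hwp hse hcyc
end

section
/- Let D ≥ 1, n ≥ D + 1, and let P : Fin n → Fin D × Fin D be any assignment of index pairs. Then there exists a ∈ Fin D such that either (F₁-type configuration) there exist distinct slots k ≠ l with P k = (a,a) and with a occurring as one of the two components of P l, or (F₂-type configuration) there exist pairwise distinct slots k, l, m such that a occurs as a component of each of P k, P l, and P m. -/
/-!
Each of the `n` pairs contributes two entries, so there are `2n > 2D` entries in total and by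
pigeonhole some value `a` occupies at least three of them. Among three such entries either two
sit in the same slot, which is then `(a, a)`, and the third, having only two positions per slot,
sits in another slot; or all three sit in distinct slots.
-/

open Finset

variable {ι α : Type*}

def pairEntry (P : ι → α × α) (p : ι × Bool) : α :=
  if p.2 then (P p.1).1 else (P p.1).2

lemma occurs_of_pairEntry_eq {P : ι → α × α} {p : ι × Bool} {a : α}
    (h : pairEntry P p = a) : (P p.1).1 = a ∨ (P p.1).2 = a := by
  unfold pairEntry at h
  split_ifs at h
  exacts [Or.inl h, Or.inr h]

lemma eq_diag_of_pairEntry_eq {P : ι → α × α} {p q : ι × Bool} {a : α} (hpq : p ≠ q)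
    (hfst : p.1 = q.1) (hp : pairEntry P p = a) (hq : pairEntry P q = a) : P p.1 = (a, a) := by
  obtain ⟨i, b⟩ := p
  obtain ⟨j, c⟩ := q
  obtain rfl : i = j := hfst
  have hbc : b ≠ c := fun h => hpq (h ▸ rfl)
  cases b <;> cases c <;> simp_all [pairEntry, Prod.ext_iff]

lemma fst_ne_of_fst_eq {x y z : ι × Bool} (hxy : x ≠ y) (hxz : x ≠ z) (hyz : y ≠ z)
    (h : x.1 = y.1) : x.1 ≠ z.1 := by
  intro h'
  have no_three_bools : ∀ b c d : Bool, b ≠ c → b ≠ d → c ≠ d → False := by decide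
  exact no_three_bools x.2 y.2 z.2 (fun e => hxy (Prod.ext h e)) (fun e => hxz (Prod.ext h' e))
    (fun e => hyz (Prod.ext (h.symm.trans h') e))

lemma exists_two_lt_card_pairEntry_fiber [Fintype ι] [Fintype α] [DecidableEq α]
    (P : ι → α × α) (h : Fintype.card α < Fintype.card ι) :
    ∃ a, 2 < #{p | pairEntry P p = a} :=
  Fintype.exists_lt_card_fiber_of_mul_lt_card (pairEntry P) <| by
    rw [Fintype.card_prod, Fintype.card_bool]; omega

theorem exists_diag_or_three_occurrences [Fintype ι] [Fintype α] (P : ι → α × α)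
    (h : Fintype.card α < Fintype.card ι) :
    ∃ a : α,
      (∃ k l : ι, k ≠ l ∧ P k = (a, a) ∧ ((P l).1 = a ∨ (P l).2 = a)) ∨
      (∃ k l m : ι, k ≠ l ∧ k ≠ m ∧ l ≠ m ∧
        ((P k).1 = a ∨ (P k).2 = a) ∧
        ((P l).1 = a ∨ (P l).2 = a) ∧
        ((P m).1 = a ∨ (P m).2 = a)) := by
  classical
  obtain ⟨a, ha⟩ := exists_two_lt_card_pairEntry_fiber P h
  obtain ⟨x, hx, y, hy, z, hz, hxy, hxz, hyz⟩ := two_lt_card.mp ha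
  simp only [mem_filter, mem_univ, true_and] at hx hy hz
  refine ⟨a, ?_⟩
  by_cases hxy₁ : x.1 = y.1
  · exact Or.inl ⟨x.1, z.1, fst_ne_of_fst_eq hxy hxz hyz hxy₁,
      eq_diag_of_pairEntry_eq hxy hxy₁ hx hy, occurs_of_pairEntry_eq hz⟩
  by_cases hxz₁ : x.1 = z.1
  · exact Or.inl ⟨x.1, y.1, hxy₁, eq_diag_of_pairEntry_eq hxz hxz₁ hx hz,
      occurs_of_pairEntry_eq hy⟩
  by_cases hyz₁ : y.1 = z.1
  · exact Or.inl ⟨y.1, x.1, Ne.symm hxy₁, eq_diag_of_pairEntry_eq hyz hyz₁ hy hz,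
      occurs_of_pairEntry_eq hx⟩
  exact Or.inr ⟨x.1, y.1, z.1, hxy₁, hxz₁, hyz₁, occurs_of_pairEntry_eq hx,
    occurs_of_pairEntry_eq hy, occurs_of_pairEntry_eq hz⟩

theorem stmt_7_general (D n : ℕ) (hn : D + 1 ≤ n)
    (P : Fin n → Fin D × Fin D) :
    ∃ a : Fin D,
      (∃ k l : Fin n, k ≠ l ∧ P k = (a, a) ∧ ((P l).1 = a ∨ (P l).2 = a)) ∨
      (∃ k l m : Fin n, k ≠ l ∧ k ≠ m ∧ l ≠ m ∧
        ((P k).1 = a ∨ (P k).2 = a) ∧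
        ((P l).1 = a ∨ (P l).2 = a) ∧
        ((P m).1 = a ∨ (P m).2 = a)) :=
  exists_diag_or_three_occurrences P (by simpa using hn)

theorem stmt_7 (D n : ℕ) (hD : 1 ≤ D) (hn : D + 1 ≤ n)
    (P : Fin n → Fin D × Fin D) :
    ∃ a : Fin D,
      (∃ k l : Fin n, k ≠ l ∧ P k = (a, a) ∧ ((P l).1 = a ∨ (P l).2 = a)) ∨
      (∃ k l m : Fin n, k ≠ l ∧ k ≠ m ∧ l ≠ m ∧
        ((P k).1 = a ∨ (P k).2 = a) ∧
        ((P l).1 = a ∨ (P l).2 = a) ∧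
        ((P m).1 = a ∨ (P m).2 = a)) :=
  stmt_7_general D n hn P
end

section
/- Let D ≥ 1, N ≥ 1 and let f : (Fin N → Matrix (Fin D) (Fin D) ℝ) → ℝ be infinitely differentiable (ContDiff ℝ ⊤). For i ∈ Fin N and a, b ∈ Fin D let E(i,a,b) denote the standard basis element as above, and suppose the second Fréchet derivative of f satisfies the cyclic identity at every point: for all X, i, j, a, b, c, d, D²f(X)(E(i,a,b), E(j,c,d)) + D²f(X)(E(i,a,c), E(j,d,b)) + D²f(X)(E(i,a,d), E(j,b,c)) = 0. Then every higher iterated derivative inherits the cyclic identity in its first two slots: for every n ≥ 2, every point X, all i, j ∈ Fin N, all a, b, c, d ∈ Fin D, and every choice of further directions v₃, …, vₙ among the basis elements E(·,·,·), one has iteratedFDeriv ℝ n f X (E(i,a,b), E(j,c,d), v₃, …, vₙ) + iteratedFDeriv ℝ n f X (E(i,a,c), E(j,d,b), v₃, …, vₙ) + iteratedFDeriv ℝ n f X (E(i,a,d), E(j,b,c), v₃, …, vₙ) = 0. -/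
section Aux

variable {E : Type} [NormedAddCommGroup E] [NormedSpace ℝ E]

/-- Pull a continuous-linear-map application out of an iterated derivative. -/
lemma aux_apply {F G : Type} [NormedAddCommGroup F] [NormedSpace ℝ F]
    [NormedAddCommGroup G] [NormedSpace ℝ G]
    (m : ℕ) (h : E → (F →L[ℝ] G)) (hh : ContDiff ℝ (⊤ : ℕ∞) h) (X : E)
    (u : Fin m → E) (A : F) :
    iteratedFDeriv ℝ m (fun Y => h Y A) X u = (iteratedFDeriv ℝ m h X u) A := by
  have := (ContinuousLinearMap.apply ℝ G A).iteratedFDeriv_comp_left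
    (hh.of_le (by exact_mod_cast le_top) : ContDiff ℝ (m : ℕ) h).contDiffAt (x := X) le_rfl
  have h2 : (fun Y => h Y A) = (ContinuousLinearMap.apply ℝ G A) ∘ h := rfl
  rw [h2, this]
  rfl

/-- Symmetry of the last two slots. -/
lemma aux_sym {F : Type} [NormedAddCommGroup F] [NormedSpace ℝ F]
    (m : ℕ) (f : E → F) (hf : ContDiff ℝ (⊤ : ℕ∞) f) (X : E) (u : Fin m → E) (A B : E) :
    (iteratedFDeriv ℝ m (fderiv ℝ (fderiv ℝ f)) X u) A B =
    (iteratedFDeriv ℝ m (fderiv ℝ (fderiv ℝ f)) X u) B A := by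
  have hd2 : ContDiff ℝ (⊤ : ℕ∞) (fderiv ℝ (fderiv ℝ f)) :=
    (hf.fderiv_right (m := (⊤ : ℕ∞)) (by simp)).fderiv_right (m := (⊤ : ℕ∞)) (by simp)
  have e1 : ∀ (A B : E),
      iteratedFDeriv ℝ m (fun Z => fderiv ℝ (fderiv ℝ f) Z A B) X u =
      (iteratedFDeriv ℝ m (fderiv ℝ (fderiv ℝ f)) X u) A B := by
    intro A B
    rw [aux_apply m (fun Z => fderiv ℝ (fderiv ℝ f) Z A)
      (hd2.clm_apply contDiff_const) X u B,
      aux_apply m _ hd2 X u A]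
  rw [← e1 A B, ← e1 B A]
  have hfun : (fun Z => fderiv ℝ (fderiv ℝ f) Z A B) =
      (fun Z => fderiv ℝ (fderiv ℝ f) Z B A) := by
    funext Z
    exact (hf.contDiffAt.isSymmSndFDerivAt (by simp; exact WithTop.coe_le_coe.mpr le_top)) A B
  rw [hfun]

/-- Peel the last two slots into an inner second derivative. -/
lemma aux_pull2 {F : Type} [NormedAddCommGroup F] [NormedSpace ℝ F]
    (m : ℕ) (f : E → F) (hf : ContDiff ℝ (⊤ : ℕ∞) f) (X : E) (u : Fin m → E) (A B : E) :
    iteratedFDeriv ℝ (m + 2) f X (Fin.snoc (Fin.snoc u A) B) =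
    iteratedFDeriv ℝ m (fun Z => fderiv ℝ (fderiv ℝ f) Z A B) X u := by
  have hd2 : ContDiff ℝ (⊤ : ℕ∞) (fderiv ℝ (fderiv ℝ f)) :=
    (hf.fderiv_right (m := (⊤ : ℕ∞)) (by simp)).fderiv_right (m := (⊤ : ℕ∞)) (by simp)
  have s1 := iteratedFDeriv_succ_apply_right (𝕜 := ℝ) (n := m + 1) (f := f)
    (x := X) (Fin.snoc (Fin.snoc u A) B)
  rw [Fin.init_snoc, Fin.snoc_last] at s1
  refine s1.trans ?_
  have s2 := iteratedFDeriv_succ_apply_right (𝕜 := ℝ) (n := m) (f := fderiv ℝ f)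
    (x := X) (Fin.snoc u A)
  rw [Fin.init_snoc, Fin.snoc_last] at s2
  rw [s2, aux_apply m (fun Z => fderiv ℝ (fderiv ℝ f) Z A)
    (hd2.clm_apply contDiff_const) X u B,
    aux_apply m _ hd2 X u A]

/-- Rotate the first slot to the last slot. -/
lemma aux_rotate (m : ℕ) :
    ∀ {F : Type} [NormedAddCommGroup F] [NormedSpace ℝ F]
      (f : E → F), ContDiff ℝ (⊤ : ℕ∞) f → ∀ (X : E) (A : E) (v : Fin m → E),
    iteratedFDeriv ℝ (m + 1) f X (Fin.cons A v) =
    iteratedFDeriv ℝ (m + 1) f X (Fin.snoc v A) := by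
  induction m with
  | zero =>
    intro F _ _ f hf X A v
    congr 1
    funext k
    fin_cases k
    simp [Fin.snoc]
  | succ k ih =>
    intro F _ _ f hf X A v
    have hg : ContDiff ℝ (⊤ : ℕ∞) (fderiv ℝ f) := hf.fderiv_right (by simp)
    have h1 : Fin.init (α := fun _ => E) (Fin.cons A v) = Fin.cons A (Fin.init v) := by
      funext j
      refine Fin.cases ?_ (fun i => ?_) j
      · simp [Fin.init]
      · simp only [Fin.init, ← Fin.succ_castSucc, Fin.cons_succ]
    have h2 : Fin.cons (α := fun _ => E) A v (Fin.last (k + 1)) = v (Fin.last k) := by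
      rw [← Fin.succ_last, Fin.cons_succ]
    have s1 := iteratedFDeriv_succ_apply_right (𝕜 := ℝ) (n := k + 1) (f := f)
      (x := X) (Fin.cons A v)
    have s2 := iteratedFDeriv_succ_apply_right (𝕜 := ℝ) (n := k + 1) (f := f)
      (x := X) (Fin.snoc v A)
    rw [h1, h2] at s1
    rw [Fin.init_snoc, Fin.snoc_last] at s2
    refine s1.trans (Eq.trans ?_ s2.symm)
    rw [ih (fderiv ℝ f) hg X A (Fin.init v)]
    conv_rhs => rw [← Fin.snoc_init_self v]
    have s3 := iteratedFDeriv_succ_apply_right (𝕜 := ℝ) (n := k) (f := fderiv ℝ f)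
      (x := X) (Fin.snoc (Fin.init v) A)
    have s4 := iteratedFDeriv_succ_apply_right (𝕜 := ℝ) (n := k) (f := fderiv ℝ f)
      (x := X) (Fin.snoc (Fin.init v) (v (Fin.last k)))
    rw [Fin.init_snoc, Fin.snoc_last] at s3 s4
    rw [s3, s4]
    exact aux_sym k f hf X (Fin.init v) A (v (Fin.last k))

end Aux



attribute [local instance] Matrix.normedAddCommGroup Matrix.normedSpace

/-- The standard basis element: a `1` in entry `(a, b)` of the `i`-th matrix
and `0` elsewhere. -/
noncomputable def stdBasisElt (D N : ℕ) (i : Fin N) (a b : Fin D) :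
    Fin N → Matrix (Fin D) (Fin D) ℝ :=
  Pi.single i (Matrix.single a b (1 : ℝ))

theorem stmt_10 (D N : ℕ) (hD : 1 ≤ D) (hN : 1 ≤ N)
    (f : (Fin N → Matrix (Fin D) (Fin D) ℝ) → ℝ)
    (hf : ContDiff ℝ (⊤ : ℕ∞) f)
    (hcyc : ∀ (X : Fin N → Matrix (Fin D) (Fin D) ℝ) (i j : Fin N)
      (a b c d : Fin D),
      iteratedFDeriv ℝ 2 f X ![stdBasisElt D N i a b, stdBasisElt D N j c d] +
      iteratedFDeriv ℝ 2 f X ![stdBasisElt D N i a c, stdBasisElt D N j d b] +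
      iteratedFDeriv ℝ 2 f X ![stdBasisElt D N i a d, stdBasisElt D N j b c] = 0) :
    ∀ (m : ℕ) (X : Fin N → Matrix (Fin D) (Fin D) ℝ) (i j : Fin N)
      (a b c d : Fin D) (v : Fin m → (Fin N → Matrix (Fin D) (Fin D) ℝ)),
      (∀ k : Fin m, ∃ (i' : Fin N) (a' b' : Fin D), v k = stdBasisElt D N i' a' b') →
      iteratedFDeriv ℝ (m + 2) f X
        (Fin.cons (stdBasisElt D N i a b) (Fin.cons (stdBasisElt D N j c d) v)) +
      iteratedFDeriv ℝ (m + 2) f X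
        (Fin.cons (stdBasisElt D N i a c) (Fin.cons (stdBasisElt D N j d b) v)) +
      iteratedFDeriv ℝ (m + 2) f X
        (Fin.cons (stdBasisElt D N i a d) (Fin.cons (stdBasisElt D N j b c) v)) = 0 := by
  intro m X i j a b c d v _
  have key : ∀ (U V : Fin N → Matrix (Fin D) (Fin D) ℝ),
      iteratedFDeriv ℝ (m + 2) f X (Fin.cons U (Fin.cons V v)) =
      iteratedFDeriv ℝ m (fun Z => fderiv ℝ (fderiv ℝ f) Z U V) X v := by
    intro U V
    have r1 := aux_rotate (m + 1) f hf X U (Fin.cons V v)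
    have e : (Fin.snoc (Fin.cons V v) U :
        Fin (m + 2) → (Fin N → Matrix (Fin D) (Fin D) ℝ)) =
        Fin.cons V (Fin.snoc v U) :=
      (Fin.cons_snoc_eq_snoc_cons V v U).symm
    rw [e] at r1
    have r2 := aux_rotate (m + 1) f hf X V (Fin.snoc v U)
    exact r1.trans (r2.trans (aux_pull2 m f hf X v U V))
  rw [key, key, key]
  have hd2 := (hf.fderiv_right (m := (⊤ : ℕ∞)) (by simp)).fderiv_right (m := (⊤ : ℕ∞)) (by simp)
  have hsm : ∀ (U V : Fin N → Matrix (Fin D) (Fin D) ℝ),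
      ContDiff ℝ (m : ℕ) (fun Z => fderiv ℝ (fderiv ℝ f) Z U V) := fun U V =>
    (((hd2.clm_apply contDiff_const).clm_apply contDiff_const).of_le (by exact_mod_cast le_top))
  have hcyc' : ∀ Z,
      fderiv ℝ (fderiv ℝ f) Z (stdBasisElt D N i a b) (stdBasisElt D N j c d) +
      fderiv ℝ (fderiv ℝ f) Z (stdBasisElt D N i a c) (stdBasisElt D N j d b) +
      fderiv ℝ (fderiv ℝ f) Z (stdBasisElt D N i a d) (stdBasisElt D N j b c) = 0 := by
    intro Z
    have h := hcyc Z i j a b c d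
    rw [iteratedFDeriv_two_apply, iteratedFDeriv_two_apply,
      iteratedFDeriv_two_apply] at h
    simp at h
    exact h
  have e3 : iteratedFDeriv ℝ m
        ((fun Z => fderiv ℝ (fderiv ℝ f) Z (stdBasisElt D N i a b) (stdBasisElt D N j c d)) +
         (fun Z => fderiv ℝ (fderiv ℝ f) Z (stdBasisElt D N i a c) (stdBasisElt D N j d b)) +
         (fun Z => fderiv ℝ (fderiv ℝ f) Z (stdBasisElt D N i a d) (stdBasisElt D N j b c))) X v =
      iteratedFDeriv ℝ m (fun Z => fderiv ℝ (fderiv ℝ f) Z (stdBasisElt D N i a b) (stdBasisElt D N j c d)) X v +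
      iteratedFDeriv ℝ m (fun Z => fderiv ℝ (fderiv ℝ f) Z (stdBasisElt D N i a c) (stdBasisElt D N j d b)) X v +
      iteratedFDeriv ℝ m (fun Z => fderiv ℝ (fderiv ℝ f) Z (stdBasisElt D N i a d) (stdBasisElt D N j b c)) X v := by
    have h12 : ContDiff ℝ (m : ℕ)
        ((fun Z => fderiv ℝ (fderiv ℝ f) Z (stdBasisElt D N i a b) (stdBasisElt D N j c d)) +
         (fun Z => fderiv ℝ (fderiv ℝ f) Z (stdBasisElt D N i a c) (stdBasisElt D N j d b))) :=
      (hsm _ _).add (hsm _ _)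
    rw [iteratedFDeriv_add_apply h12.contDiffAt (hsm _ _).contDiffAt,
      iteratedFDeriv_add_apply (hsm _ _).contDiffAt (hsm _ _).contDiffAt]
    rfl
  rw [← e3]
  have hfun :
      ((fun Z => fderiv ℝ (fderiv ℝ f) Z (stdBasisElt D N i a b) (stdBasisElt D N j c d)) +
       (fun Z => fderiv ℝ (fderiv ℝ f) Z (stdBasisElt D N i a c) (stdBasisElt D N j d b)) +
       (fun Z => fderiv ℝ (fderiv ℝ f) Z (stdBasisElt D N i a d) (stdBasisElt D N j b c))) =
      (fun _ => (0 : ℝ)) := by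
    funext Z
    simpa using hcyc' Z
  rw [hfun]
  have := iteratedFDeriv_zero_fun (𝕜 := ℝ)
    (E := Fin N → Matrix (Fin D) (Fin D) ℝ) (F := ℝ) (n := m)
  rw [this]
  simp
end
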